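/- arXiv:1905.05083 — 3 statements merged into one kernel-verified Lean document; each statement's English description precedes it below -/
import Mathlib

section
/- Let D be a strongly connected 2-in-regular digraph without loops, with V(D) finite, and let LD be its line digraph. Then LD admits a (1,≤2)-identifying code if and only if there do not exist four distinct vertices x, x', y, y' of LD such that N^-(x) = {y, y'}, N^-(y) = {x, x'}, and N^-(x') ∩ N^-(y') ≠ ∅. -/
/-- The (open) in-neighbourhood of `v` in the digraph with adjacency relation `A`. -/
def Nminus {V : Type*} (A : V → V → Prop) (v : V) : Set V := {u | A u v}

/-- The out-neighbourhood of `v`. -/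
def Nplus {V : Type*} (A : V → V → Prop) (v : V) : Set V := {u | A v u}

/-- The closed in-neighbourhood `N^-[v] = {v} ∪ N^-(v)`. -/
def NminusClosed {V : Type*} (A : V → V → Prop) (v : V) : Set V := insert v (Nminus A v)

/-- `N^-[S] = ⋃_{v ∈ S} N^-[v]`. -/
def NminusSet {V : Type*} (A : V → V → Prop) (S : Set V) : Set V := ⋃ v ∈ S, NminusClosed A v

/-- A digraph is strongly connected if there is a directed path between any ordered
pair of vertices. -/
def StronglyConnected {V : Type*} (A : V → V → Prop) : Prop :=
  ∀ u v : V, Relation.ReflTransGen A u v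

/-- The vertices of the line digraph of `A` are the arcs of `A`. -/
abbrev LineVertex {V : Type*} (A : V → V → Prop) : Type _ := {e : V × V // A e.1 e.2}

/-- Adjacency in the line digraph: there is an arc from `uv` to `wz` iff `v = w`. -/
def LineAdj {V : Type*} (A : V → V → Prop) (e f : LineVertex A) : Prop := e.val.2 = f.val.1

/-- A digraph admits a `(1,≤ℓ)`-identifying code iff all distinct nonempty vertex subsets of
cardinality at most `ℓ` have distinct closed in-neighbourhoods. -/
def AdmitsIdCode {W : Type*} (R : W → W → Prop) (ℓ : ℕ) : Prop :=
  ∀ X Y : Set W, X.Nonempty → Y.Nonempty → X.ncard ≤ ℓ → Y.ncard ≤ ℓ → X ≠ Y →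
    NminusSet R X ≠ NminusSet R Y

/-- `C` is a `(1,≤1)`-identifying code: a dominating set separating closed
in-neighbourhoods of distinct vertices. -/
def IsIdCode {W : Type*} (R : W → W → Prop) (C : Set W) : Prop :=
  (∀ v : W, v ∈ C ∨ ∃ u ∈ C, R u v) ∧
  ∀ x y : W, x ≠ y → NminusClosed R x ∩ C ≠ NminusClosed R y ∩ C

/-- The identifying number: minimum size of a `(1,≤1)`-identifying code. -/
noncomputable def idNumber {W : Type*} (R : W → W → Prop) : ℕ :=
  sInf {n | ∃ C : Set W, IsIdCode R C ∧ C.ncard = n}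

/-- The set of arcs of `A` with head `v`. -/
def omegaMinus {V : Type*} (A : V → V → Prop) (v : V) : Set (V × V) :=
  {p | A p.1 p.2 ∧ p.2 = v}

/-- The set of arcs of `A` with tail `v`. -/
def omegaPlus {V : Type*} (A : V → V → Prop) (v : V) : Set (V × V) :=
  {p | A p.1 p.2 ∧ p.1 = v}

/-- `C` is an arc-identifying code of the digraph `A`: an arc-dominating and
arc-separating set of arcs. -/
def IsArcIdCode {V : Type*} (A : V → V → Prop) (C : Set (V × V)) : Prop :=
  (∀ p : V × V, A p.1 p.2 → ((insert p (omegaMinus A p.1)) ∩ C).Nonempty) ∧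
  ∀ p q : V × V, A p.1 p.2 → A q.1 q.2 → p ≠ q →
    (insert p (omegaMinus A p.1)) ∩ C ≠ (insert q (omegaMinus A q.1)) ∩ C

/-- Vertices of the Kautz digraph `K(d,k)`: words of length `k` over an alphabet of
`d+1` symbols with no two consecutive symbols equal. -/
def KautzVertex (d k : ℕ) : Type :=
  {x : Fin k → Fin (d + 1) // ∀ i j : Fin k, (j : ℕ) = (i : ℕ) + 1 → x i ≠ x j}

/-- Adjacency in the Kautz digraph: there is an arc from `x₁x₂…x_k` to `x₂…x_k y`. -/
def KautzAdj (d k : ℕ) (x y : KautzVertex d k) : Prop :=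
  ∀ i j : Fin k, (j : ℕ) = (i : ℕ) + 1 → y.val i = x.val j

/-!
In the line digraph an arc's in-neighbourhood depends only on its tail. So in-neighbourhoods
("blocks") are pairwise equal or disjoint sets of size two, no vertex lies in its own block, and
two in-neighbours of a common vertex have different blocks.

Suppose `N⁻[X] = N⁻[Y]` with `X ≠ Y`. If the block of some `x ∈ X` is the block of no element of
`Y`, it must lie inside `Y`, hence equals `Y = {y₁, y₂}`; placing the blocks of `y₁` and `y₂`
inside `N⁻[X]` then produces the forbidden configuration, with `x'` the second element of `X`.
Otherwise `X` and `Y` have the same blocks. An element `x ∈ X \ Y` then lies in the block of the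
other element `x''` of `X`, and so does the element of `Y` whose block is that of `x`: two
in-neighbours of `x''` with the same block, a contradiction.
-/

section Blocks

variable {W : Type*} {R : W → W → Prop}

theorem mem_NminusSet {S : Set W} {a : W} :
    a ∈ NminusSet R S ↔ a ∈ S ∨ ∃ v ∈ S, a ∈ Nminus R v := by
  simp only [NminusSet, NminusClosed, Set.mem_iUnion, Set.mem_insert_iff, exists_prop]
  grind

theorem self_subset_NminusSet (S : Set W) : S ⊆ NminusSet R S :=
  fun _ ha ↦ mem_NminusSet.2 (Or.inl ha)

theorem Nminus_subset_NminusSet {S : Set W} {v : W} (hv : v ∈ S) :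
    Nminus R v ⊆ NminusSet R S :=
  fun _ ha ↦ mem_NminusSet.2 (Or.inr ⟨v, hv, ha⟩)

theorem eq_or_eq_of_ncard_le_two [Finite W] {S : Set W} (hS : S.ncard ≤ 2) {a b c : W}
    (ha : a ∈ S) (hb : b ∈ S) (hc : c ∈ S) (hab : a ≠ b) : c = a ∨ c = b := by
  by_contra! h
  exact ((Set.two_lt_ncard_iff).2 ⟨a, b, c, ha, hb, hc, hab, h.1.symm, h.2.symm⟩).not_ge hS

/-- Properties of the line digraph of a loopless 2-in-regular digraph. `Nminus_eq_of_mem` is the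
line digraph condition (in-neighbourhoods are equal or disjoint); `eq_of_Nminus_eq` reflects the
absence of parallel arcs. -/
structure IsTwoInRegularLineLike (R : W → W → Prop) : Prop where
  ncard_Nminus : ∀ v, (Nminus R v).ncard = 2
  Nminus_eq_of_mem : ∀ {u v w}, w ∈ Nminus R u → w ∈ Nminus R v → Nminus R u = Nminus R v
  not_mem_Nminus_self : ∀ v, v ∉ Nminus R v
  eq_of_Nminus_eq : ∀ {a b w}, a ∈ Nminus R w → b ∈ Nminus R w →
    Nminus R a = Nminus R b → a = b

def HasForbiddenConfig (R : W → W → Prop) : Prop :=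
  ∃ x x' y y' : W,
    x ≠ x' ∧ x ≠ y ∧ x ≠ y' ∧ x' ≠ y ∧ x' ≠ y' ∧ y ≠ y' ∧
    Nminus R x = {y, y'} ∧ Nminus R y = {x, x'} ∧
    (Nminus R x' ∩ Nminus R y').Nonempty

namespace IsTwoInRegularLineLike

variable (hR : IsTwoInRegularLineLike R)
include hR

theorem ne_of_mem_Nminus {a b : W} (h : a ∈ Nminus R b) : a ≠ b :=
  fun hab ↦ hR.not_mem_Nminus_self b (hab ▸ h)

theorem Nminus_ne_of_mem {a b : W} (h : a ∈ Nminus R b) : Nminus R a ≠ Nminus R b :=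
  fun hab ↦ hR.not_mem_Nminus_self a (hab ▸ h)

theorem exists_Nminus_eq_pair {a v : W} (ha : a ∈ Nminus R v) :
    ∃ b, b ≠ a ∧ Nminus R v = {a, b} := by
  obtain ⟨p, q, hpq, hv⟩ := Set.ncard_eq_two.1 (hR.ncard_Nminus v)
  rw [hv] at ha ⊢
  rcases ha with rfl | rfl
  · exact ⟨q, hpq.symm, rfl⟩
  · exact ⟨p, hpq, Set.pair_comm _ _⟩

theorem Nminus_eq_of_subset [Finite W] {S : Set W} (hS : S.ncard ≤ 2) {v : W}
    (h : Nminus R v ⊆ S) : Nminus R v = S :=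
  Set.eq_of_subset_of_ncard_le h (hR.ncard_Nminus v ▸ hS)

theorem Nminus_subset_or_exists_eq {S : Set W} {v : W} (h : Nminus R v ⊆ NminusSet R S) :
    Nminus R v ⊆ S ∨ ∃ s ∈ S, Nminus R v = Nminus R s := by
  refine or_iff_not_imp_left.2 fun hS ↦ ?_
  obtain ⟨t, ht, htS⟩ := Set.not_subset.1 hS
  obtain ⟨s, hs, hts⟩ := (mem_NminusSet.1 (h ht)).resolve_left htS
  exact ⟨s, hs, hR.Nminus_eq_of_mem ht hts⟩

theorem hasForbiddenConfig_of_Nminus_ne [Finite W] {X Y : Set W} (hX : X.ncard ≤ 2)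
    (hY : Y.ncard ≤ 2) (hXY : NminusSet R X = NminusSet R Y) {x : W} (hx : x ∈ X)
    (hxY : ∀ y ∈ Y, Nminus R x ≠ Nminus R y) : HasForbiddenConfig R := by
  have hNx : Nminus R x = Y := by
    refine hR.Nminus_eq_of_subset hY ?_
    refine (hR.Nminus_subset_or_exists_eq (hXY ▸ Nminus_subset_NminusSet hx)).resolve_right ?_
    rintro ⟨y, hy, h⟩
    exact hxY y hy h
  obtain ⟨y₁, hy₁, hxy₁⟩ : ∃ y ∈ Y, x ∈ Nminus R y := by
    refine (mem_NminusSet.1 (hXY ▸ self_subset_NminusSet X hx)).resolve_left fun hxmem ↦ ?_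
    exact hR.not_mem_Nminus_self x (hNx ▸ hxmem)
  obtain ⟨y₂, hy₂₁, hNx_pair⟩ := hR.exists_Nminus_eq_pair (hNx ▸ hy₁ : y₁ ∈ Nminus R x)
  have hy₁x : y₁ ∈ Nminus R x := hNx_pair ▸ Set.mem_insert _ _
  have hy₂x : y₂ ∈ Nminus R x := hNx_pair ▸ Set.mem_insert_of_mem _ rfl
  have hN₁₂ : Nminus R y₁ ≠ Nminus R y₂ := fun h ↦ hy₂₁ (hR.eq_of_Nminus_eq hy₂x hy₁x h.symm)
  have hNY : ∀ {y}, y ∈ Nminus R x → Nminus R y ⊆ NminusSet R X :=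
    fun hy ↦ hXY ▸ Nminus_subset_NminusSet (hNx ▸ hy)
  obtain ⟨x', hx', hNx'⟩ : ∃ x' ∈ X, Nminus R y₂ = Nminus R x' := by
    refine (hR.Nminus_subset_or_exists_eq (hNY hy₂x)).resolve_left fun hsub ↦ ?_
    exact hN₁₂ (hR.Nminus_eq_of_mem hxy₁ (hR.Nminus_eq_of_subset hX hsub ▸ hx))
  have hxx' : x ≠ x' := by
    rintro rfl
    exact hR.Nminus_ne_of_mem hy₂x hNx'
  have hX_eq : {x, x'} = X :=
    Set.eq_of_subset_of_ncard_le (Set.pair_subset hx hx') (Set.ncard_pair hxx' ▸ hX)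
  have hNy₁ : Nminus R y₁ = {x, x'} := by
    refine hX_eq ▸ hR.Nminus_eq_of_subset hX ?_
    refine (hR.Nminus_subset_or_exists_eq (hNY hy₁x)).resolve_right ?_
    rintro ⟨z, hz, hz'⟩
    rcases hX_eq ▸ hz with rfl | rfl
    · exact hR.Nminus_ne_of_mem hy₁x hz'
    · exact hN₁₂ (hz'.trans hNx'.symm)
  have hx'y₁ : x' ∈ Nminus R y₁ := hNy₁ ▸ Set.mem_insert_of_mem _ rfl
  refine ⟨x, x', y₁, y₂, hxx', (hR.ne_of_mem_Nminus hy₁x).symm,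
    (hR.ne_of_mem_Nminus hy₂x).symm, hR.ne_of_mem_Nminus hx'y₁, ?_, hy₂₁.symm, hNx_pair, hNy₁,
    ?_⟩
  · rintro rfl
    exact hR.Nminus_ne_of_mem hy₁x (hR.Nminus_eq_of_mem hx'y₁ hy₂x)
  · obtain ⟨t, ht⟩ := Set.nonempty_of_ncard_ne_zero (hR.ncard_Nminus x' ▸ two_ne_zero)
    exact ⟨t, ht, hNx' ▸ ht⟩

theorem false_of_Nminus_matched [Finite W] {X Y : Set W} (hX : X.ncard ≤ 2)
    (hXY : NminusSet R X = NminusSet R Y)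
    (hXtoY : ∀ x ∈ X, ∃ y ∈ Y, Nminus R x = Nminus R y)
    (hYtoX : ∀ y ∈ Y, ∃ x ∈ X, Nminus R y = Nminus R x) {x : W} (hx : x ∈ X) (hxY : x ∉ Y) :
    False := by
  obtain ⟨y, hy, hxy⟩ :=
    (mem_NminusSet.1 (hXY ▸ self_subset_NminusSet X hx)).resolve_left hxY
  obtain ⟨x'', hx'', hyx''⟩ := hYtoX y hy
  have hxx'' : x ∈ Nminus R x'' := hyx'' ▸ hxy
  obtain ⟨y₁, hy₁, hxy₁⟩ := hXtoY x hx
  rcases mem_NminusSet.1 (hXY ▸ self_subset_NminusSet Y hy₁) with hy₁X | ⟨z, hz, hy₁z⟩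
  · rcases eq_or_eq_of_ncard_le_two hX hx'' hx hy₁X (hR.ne_of_mem_Nminus hxx'').symm
      with rfl | rfl
    · exact hR.Nminus_ne_of_mem hxx'' hxy₁
    · exact hxY hy₁
  · have hzx : z ≠ x := by
      rintro rfl
      exact hR.not_mem_Nminus_self y₁ (hxy₁ ▸ hy₁z)
    rcases eq_or_eq_of_ncard_le_two hX hx'' hx hz (hR.ne_of_mem_Nminus hxx'').symm
      with rfl | rfl
    · exact hxY (hR.eq_of_Nminus_eq hxx'' hy₁z hxy₁ ▸ hy₁)
    · exact hzx rfl

theorem not_admitsIdCode_two_of_hasForbiddenConfig (h : HasForbiddenConfig R) :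
    ¬ AdmitsIdCode R 2 := by
  obtain ⟨x, x', y, y', hxx', hxy, hxy', -, -, hyy', hNx, hNy, s, hsx', hsy'⟩ := h
  have hN' : Nminus R x' = Nminus R y' := hR.Nminus_eq_of_mem hsx' hsy'
  refine fun hcode ↦ hcode {x, x'} {y, y'} (Set.insert_nonempty _ _) (Set.insert_nonempty _ _)
    (Set.ncard_pair hxx').le (Set.ncard_pair hyy').le ?_ ?_
  · intro hXY
    have hx : x ∈ ({y, y'} : Set W) := hXY ▸ Set.mem_insert _ _
    rcases hx with rfl | rfl
    exacts [hxy rfl, hxy' rfl]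
  · ext t
    simp only [mem_NminusSet, Set.mem_insert_iff, Set.mem_singleton_iff, or_and_right, exists_or,
      exists_eq_left, hNx, hNy, hN']
    tauto

theorem admitsIdCode_two_iff [Finite W] :
    AdmitsIdCode R 2 ↔ ¬ HasForbiddenConfig R := by
  refine ⟨fun hcode h ↦ hR.not_admitsIdCode_two_of_hasForbiddenConfig h hcode, ?_⟩
  intro hno X Y _ _ hX hY hne hXY
  by_cases hXnew : ∃ x ∈ X, ∀ y ∈ Y, Nminus R x ≠ Nminus R y
  · obtain ⟨x, hx, hxY⟩ := hXnew
    exact hno (hR.hasForbiddenConfig_of_Nminus_ne hX hY hXY hx hxY)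
  by_cases hYnew : ∃ y ∈ Y, ∀ x ∈ X, Nminus R y ≠ Nminus R x
  · obtain ⟨y, hy, hyX⟩ := hYnew
    exact hno (hR.hasForbiddenConfig_of_Nminus_ne hY hX hXY.symm hy hyX)
  push Not at hXnew hYnew
  by_cases hXsub : X ⊆ Y
  · obtain ⟨y, hy, hyX⟩ := Set.not_subset.1 fun hYsub ↦ hne (hXsub.antisymm hYsub)
    exact hR.false_of_Nminus_matched hY hXY.symm hYnew hXnew hy hyX
  · obtain ⟨x, hx, hxY⟩ := Set.not_subset.1 hXsub
    exact hR.false_of_Nminus_matched hX hXY hXnew hYnew hx hxY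

end IsTwoInRegularLineLike

end Blocks

section LineDigraph

variable {V : Type*} {A : V → V → Prop}

theorem mem_Nminus_lineAdj {e f : LineVertex A} :
    f ∈ Nminus (LineAdj A) e ↔ f.1.2 = e.1.1 :=
  Iff.rfl

theorem ncard_Nminus_lineAdj (e : LineVertex A) :
    (Nminus (LineAdj A) e).ncard = (Nminus A e.1.1).ncard := by
  refine Set.ncard_congr (fun f _ ↦ f.1.1) (fun f hf ↦ ?_) (fun f g hf hg hfg ↦ ?_)
    (fun u hu ↦ ⟨⟨(u, e.1.1), hu⟩, rfl, rfl⟩)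
  · exact (mem_Nminus_lineAdj.1 hf) ▸ f.2
  · exact Subtype.ext <|
      Prod.ext hfg ((mem_Nminus_lineAdj.1 hf).trans (mem_Nminus_lineAdj.1 hg).symm)

theorem isTwoInRegularLineLike_lineAdj (hloop : ∀ v, ¬ A v v)
    (hreg : ∀ v, (Nminus A v).ncard = 2) : IsTwoInRegularLineLike (LineAdj A) where
  ncard_Nminus e := (ncard_Nminus_lineAdj e).trans (hreg _)
  Nminus_eq_of_mem {u v w} hu hv := by
    ext f
    simp only [mem_Nminus_lineAdj, ← mem_Nminus_lineAdj.1 hu, mem_Nminus_lineAdj.1 hv]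
  not_mem_Nminus_self e he := hloop _ ((mem_Nminus_lineAdj.1 he) ▸ e.2)
  eq_of_Nminus_eq {a b w} ha hb hab := by
    obtain ⟨u, hu⟩ := Set.nonempty_of_ncard_ne_zero ((hreg a.1.1).symm ▸ two_ne_zero)
    have hfa : (⟨(u, a.1.1), hu⟩ : LineVertex A) ∈ Nminus (LineAdj A) b := hab ▸ rfl
    exact Subtype.ext <|
      Prod.ext hfa ((mem_Nminus_lineAdj.1 ha).trans (mem_Nminus_lineAdj.1 hb).symm)

end LineDigraph

theorem line_digraph_two_in_regular_id_code_iff_general {V : Type*} [Fintype V]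
    (A : V → V → Prop) (hloop : ∀ v : V, ¬ A v v)
    (hreg : ∀ v : V, (Nminus A v).ncard = 2) :
    AdmitsIdCode (LineAdj A) 2 ↔
      ¬ ∃ x x' y y' : LineVertex A,
        x ≠ x' ∧ x ≠ y ∧ x ≠ y' ∧ x' ≠ y ∧ x' ≠ y' ∧ y ≠ y' ∧
        Nminus (LineAdj A) x = {y, y'} ∧ Nminus (LineAdj A) y = {x, x'} ∧
        (Nminus (LineAdj A) x' ∩ Nminus (LineAdj A) y').Nonempty :=
  (isTwoInRegularLineLike_lineAdj hloop hreg).admitsIdCode_two_iff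

/-- The line digraph of a strongly connected 2-in-regular loopless digraph admits a
`(1,≤2)`-identifying code iff it does not contain the forbidden configuration (iii). -/
theorem line_digraph_two_in_regular_id_code_iff {V : Type*} [Fintype V]
    (A : V → V → Prop) (hloop : ∀ v : V, ¬ A v v) (hsc : StronglyConnected A)
    (hreg : ∀ v : V, (Nminus A v).ncard = 2) :
    AdmitsIdCode (LineAdj A) 2 ↔
      ¬ ∃ x x' y y' : LineVertex A,
        x ≠ x' ∧ x ≠ y ∧ x ≠ y' ∧ x' ≠ y ∧ x' ≠ y' ∧ y ≠ y' ∧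
        Nminus (LineAdj A) x = {y, y'} ∧ Nminus (LineAdj A) y = {x, x'} ∧
        (Nminus (LineAdj A) x' ∩ Nminus (LineAdj A) y').Nonempty :=
  line_digraph_two_in_regular_id_code_iff_general A hloop hreg
end

section
/- For every integer n ≥ 3, the Kautz digraph K(n,2), i.e., the line digraph of the complete symmetric digraph K_{n+1} on n+1 vertices, admits a (1,≤2)-identifying code. -/
/-!
In the line digraph, `N^-[X]` consists of `X` together with every arc whose head is the tail
of an arc of `X`. If `X` contains an arc with tail `w`, then all in-arcs of `w` lie in `N^-[X]`;
when `w` has in-degree at least three, a set `Y` of at most two arcs with the same closed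
in-neighbourhood cannot contain all of them, so one of them is dominated by an arc of `Y` with
tail `w`. Hence `X` and `Y` have the same tails, and the few remaining configurations are ruled
out because the digraph has no loops.
-/

theorem Set.eq_or_eq_of_ncard_le_two {α : Type*} {s : Set α} (hs : s.ncard ≤ 2)
    (hfin : s.Finite) {a b c : α} (ha : a ∈ s) (hb : b ∈ s) (hab : a ≠ b) (hc : c ∈ s) :
    c = a ∨ c = b := by
  by_contra! h
  have : 2 < s.ncard :=
    (Set.two_lt_ncard_iff hfin).2 ⟨a, b, c, ha, hb, hc, hab, h.1.symm, h.2.symm⟩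
  omega

namespace LineAdj

variable {V : Type*} {A : V → V → Prop}

theorem mem_NminusSet_iff {X : Set (LineVertex A)} {p : LineVertex A} :
    p ∈ NminusSet (LineAdj A) X ↔ p ∈ X ∨ ∃ q ∈ X, p.val.2 = q.val.1 := by
  simp only [NminusSet, NminusClosed, Nminus, LineAdj, Set.mem_iUnion, Set.mem_insert_iff,
    Set.mem_ofPred_eq, exists_prop]
  constructor
  · rintro ⟨q, hq, rfl | h⟩
    exacts [Or.inl hq, Or.inr ⟨q, hq, h⟩]
  · rintro (hp | ⟨q, hq, h⟩)
    exacts [⟨p, hp, Or.inl rfl⟩, ⟨q, hq, Or.inr h⟩]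

variable [Finite V] {X Y : Set (LineVertex A)}

theorem exists_tail_eq_of_NminusSet_eq (hdeg : ∀ w, 3 ≤ (Nminus A w).ncard)
    (hY : Y.ncard ≤ 2) (hXY : NminusSet (LineAdj A) X = NminusSet (LineAdj A) Y)
    {e : LineVertex A} (he : e ∈ X) : ∃ f ∈ Y, f.val.1 = e.val.1 := by
  by_contra! hnone
  have hin : Nminus A e.val.1 ⊆ (fun p : LineVertex A => p.val.1) '' Y := by
    intro u hu
    have hp : (⟨(u, e.val.1), hu⟩ : LineVertex A) ∈ NminusSet (LineAdj A) Y :=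
      hXY ▸ mem_NminusSet_iff.2 (Or.inr ⟨e, he, rfl⟩)
    rcases mem_NminusSet_iff.1 hp with hpY | ⟨f, hfY, hf⟩
    · exact ⟨_, hpY, rfl⟩
    · exact absurd hf.symm (hnone f hfY)
  have := (hdeg e.val.1).trans ((Set.ncard_le_ncard hin).trans Set.ncard_image_le)
  omega

theorem subset_of_NminusSet_eq (hloop : ∀ v, ¬ A v v) (hdeg : ∀ w, 3 ≤ (Nminus A w).ncard)
    (hX : X.ncard ≤ 2) (hY : Y.ncard ≤ 2)
    (hXY : NminusSet (LineAdj A) X = NminusSet (LineAdj A) Y) : X ⊆ Y := by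
  have loopless (p : LineVertex A) : p.val.1 ≠ p.val.2 := fun h => hloop _ (h ▸ p.prop)
  intro e he
  by_cases hhead : ∃ f ∈ X, f.val.1 = e.val.2
  · obtain ⟨f, hf, hfe⟩ := hhead
    have hef : e ≠ f := by rintro rfl; exact loopless e hfe
    have hX_pair {g} (hg : g ∈ X) := Set.eq_or_eq_of_ncard_le_two hX (Set.toFinite X) he hf hef hg
    obtain ⟨h, hhY, hhe⟩ := exists_tail_eq_of_NminusSet_eq hdeg hY hXY he
    suffices h = e from this ▸ hhY
    have hhX : h ∈ NminusSet (LineAdj A) X := hXY ▸ mem_NminusSet_iff.2 (Or.inl hhY)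
    rcases mem_NminusSet_iff.1 hhX with hh | ⟨q, hq, hhq⟩
    · rcases hX_pair hh with rfl | rfl
      · rfl
      · exact absurd (hhe.symm.trans hfe) (loopless e)
    · rcases hX_pair hq with rfl | rfl
      · exact absurd (hhe.trans hhq.symm) (loopless h)
      · exact Subtype.ext (Prod.ext hhe (hhq.trans hfe))
  · have heY : e ∈ NminusSet (LineAdj A) Y := hXY ▸ mem_NminusSet_iff.2 (Or.inl he)
    rcases mem_NminusSet_iff.1 heY with heY | ⟨q, hq, hqe⟩
    · exact heY
    · obtain ⟨f, hf, hfq⟩ := exists_tail_eq_of_NminusSet_eq hdeg hX hXY.symm hq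
      exact absurd ⟨f, hf, hfq.trans hqe.symm⟩ hhead

theorem admitsIdCode_two (hloop : ∀ v, ¬ A v v) (hdeg : ∀ w, 3 ≤ (Nminus A w).ncard) :
    AdmitsIdCode (LineAdj A) 2 := fun _ _ _ _ hX hY hne hXY =>
  hne ((subset_of_NminusSet_eq hloop hdeg hX hY hXY).antisymm
    (subset_of_NminusSet_eq hloop hdeg hY hX hXY.symm))

end LineAdj

/-- For every `n ≥ 3`, the Kautz digraph `K(n,2)`, i.e. the line digraph of the complete
symmetric digraph on `n+1` vertices, admits a `(1,≤2)`-identifying code. -/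
theorem kautz_n_two_admits_id_code_two (n : ℕ) (hn : 3 ≤ n) :
    AdmitsIdCode (LineAdj (fun u v : Fin (n + 1) => u ≠ v)) 2 := by
  refine LineAdj.admitsIdCode_two (fun _ h => h rfl) fun w => ?_
  have hN : Nminus (fun u v : Fin (n + 1) => u ≠ v) w = {w}ᶜ := rfl
  rw [hN, Set.ncard_compl, Nat.card_eq_fintype_card, Fintype.card_fin, Set.ncard_singleton]
  omega
end

section
/- Let D be a strongly connected digraph without loops, with V(D) finite, containing a Hamiltonian directed cycle, with minimum in-degree δ^-(D) ≥ 3 and minimum out-degree δ^+(D) ≥ 2. Then the identifying number of its line digraph satisfies γ^ID(LD) = |A(D)| − |V(D)|. -/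
/-!
An arc `e` of `D` outside a code `C` is seen by `C` only through the arcs of `C` entering its
tail, so distinct arcs outside an identifying code have distinct tails and at most `|V(D)|` arcs
lie outside it. Conversely, let `C` be the set of arcs off a Hamiltonian cycle. Every vertex has
in-degree at least `3` and at most one cycle arc entering it, so at least two arcs of `C` enter
each tail; hence `N^-[e] ∩ C` determines the tail of `e`, and arcs with a common tail are
separated because no cycle arcs share a tail and `D` has no loops.
-/

section LineDigraph

variable {V : Type*} {A : V → V → Prop}

lemma mem_nminusClosed_lineAdj {e f : LineVertex A} :
    f ∈ NminusClosed (LineAdj A) e ↔ f = e ∨ f.val.2 = e.val.1 :=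
  Iff.rfl

lemma nminusClosed_lineAdj_inter_of_notMem {C : Set (LineVertex A)} {e : LineVertex A}
    (he : e ∉ C) : NminusClosed (LineAdj A) e ∩ C = {f | f.val.2 = e.val.1} ∩ C :=
  Set.insert_inter_of_notMem he

lemma IsIdCode.injOn_fst_compl {C : Set (LineVertex A)} (hC : IsIdCode (LineAdj A) C) :
    Set.InjOn (fun e : LineVertex A => e.val.1) Cᶜ := by
  intro e he f hf htail
  by_contra hne
  apply hC.2 e f hne
  rw [nminusClosed_lineAdj_inter_of_notMem he, nminusClosed_lineAdj_inter_of_notMem hf]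
  rw [show e.val.1 = f.val.1 from htail]

lemma IsIdCode.ncard_compl_le [Finite V] {C : Set (LineVertex A)}
    (hC : IsIdCode (LineAdj A) C) : Cᶜ.ncard ≤ Nat.card V := by
  rw [← Set.ncard_univ]
  exact Set.ncard_le_ncard_of_injOn _ (fun _ _ => Set.mem_univ _) hC.injOn_fst_compl

lemma card_lineVertex : Nat.card (LineVertex A) = {p : V × V | A p.1 p.2}.ncard :=
  Nat.card_coe_set_eq _

lemma IsIdCode.ncard_arcs_sub_card_le [Finite V] {C : Set (LineVertex A)}
    (hC : IsIdCode (LineAdj A) C) :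
    {p : V × V | A p.1 p.2}.ncard - Nat.card V ≤ C.ncard := by
  have hsplit := Set.ncard_add_ncard_compl C
  rw [card_lineVertex] at hsplit
  have := hC.ncard_compl_le
  omega

lemma eq_of_mem_nminusClosed_lineAdj (hloop : ∀ v, ¬ A v v) {e f : LineVertex A}
    (hef : e ∈ NminusClosed (LineAdj A) f) (htail : e.val.1 = f.val.1) : e = f := by
  rcases mem_nminusClosed_lineAdj.1 hef with h | h
  · exact h
  · exact absurd (h ▸ htail ▸ e.prop) (hloop _)

lemma isIdCode_of_injOn_fst_compl (hloop : ∀ v, ¬ A v v) {C : Set (LineVertex A)}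
    (hinj : Set.InjOn (fun e : LineVertex A => e.val.1) Cᶜ)
    (hin : ∀ v, ({f : LineVertex A | f.val.2 = v} ∩ C).Nontrivial) :
    IsIdCode (LineAdj A) C := by
  refine ⟨fun e => ?_, fun e f hne heq => ?_⟩
  · obtain ⟨g, hg, hgC⟩ := (hin e.val.1).nonempty
    exact Or.inr ⟨g, hgC, hg⟩
  by_cases htail : e.val.1 = f.val.1
  · by_cases heC : e ∈ C
    · have he : e ∈ NminusClosed (LineAdj A) f ∩ C := heq ▸ ⟨Set.mem_insert _ _, heC⟩
      exact hne (eq_of_mem_nminusClosed_lineAdj hloop he.1 htail)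
    by_cases hfC : f ∈ C
    · have hf : f ∈ NminusClosed (LineAdj A) e ∩ C := heq ▸ ⟨Set.mem_insert _ _, hfC⟩
      exact hne (eq_of_mem_nminusClosed_lineAdj hloop hf.1 htail.symm).symm
    exact hne (hinj heC hfC htail)
  · -- the arcs of `C` entering the tail of `e` would all have to be `f`
    refine (hin e.val.1).not_subset_singleton (x := f) fun g ⟨hg, hgC⟩ => ?_
    have hgf : g ∈ NminusClosed (LineAdj A) f ∩ C := heq ▸ ⟨Or.inr hg, hgC⟩
    rcases mem_nminusClosed_lineAdj.1 hgf.1 with h | h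
    · exact h
    · exact absurd (hg.symm.trans h) htail

lemma ncard_arcs_into (v : V) :
    {f : LineVertex A | f.val.2 = v}.ncard = (Nminus A v).ncard := by
  have himage : (fun f : LineVertex A => f.val.1) '' {f | f.val.2 = v} = Nminus A v := by
    ext u
    constructor
    · rintro ⟨f, rfl, rfl⟩
      exact f.prop
    · intro hu
      exact ⟨⟨(u, v), hu⟩, rfl, rfl⟩
  rw [← himage, Set.InjOn.ncard_image]
  rintro f rfl g hg htail
  exact Subtype.ext (Prod.ext htail hg.symm)

lemma nontrivial_arcs_into_inter_compl [Finite V] {S : Set (LineVertex A)}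
    (hS : Set.InjOn (fun e : LineVertex A => e.val.2) S) {v : V}
    (hv : 3 ≤ (Nminus A v).ncard) :
    ({f : LineVertex A | f.val.2 = v} ∩ Sᶜ).Nontrivial := by
  have hS_into : ({f : LineVertex A | f.val.2 = v} ∩ S).ncard ≤ 1 :=
    (Set.ncard_le_one).2 fun a ⟨ha, haS⟩ b ⟨hb, hbS⟩ => hS haS hbS (ha.trans hb.symm)
  have hsplit := Set.ncard_inter_add_ncard_sdiff_eq_ncard {f : LineVertex A | f.val.2 = v} S
  rw [ncard_arcs_into, Set.sdiff_eq] at hsplit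
  rw [← Set.one_lt_ncard_iff_nontrivial]
  omega

def cycleArcs {n : ℕ} (φ : ZMod n ≃ V) (hφ : ∀ i, A (φ i) (φ (i + 1))) : Set (LineVertex A) :=
  Set.range fun i => ⟨(φ i, φ (i + 1)), hφ i⟩

variable {n : ℕ} (φ : ZMod n ≃ V) (hφ : ∀ i, A (φ i) (φ (i + 1)))

lemma injOn_fst_cycleArcs : Set.InjOn (fun e : LineVertex A => e.val.1) (cycleArcs φ hφ) :=
  Function.Injective.injOn_range φ.injective

lemma injOn_snd_cycleArcs : Set.InjOn (fun e : LineVertex A => e.val.2) (cycleArcs φ hφ) :=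
  Function.Injective.injOn_range (φ.injective.comp (add_left_injective 1))

lemma ncard_cycleArcs : (cycleArcs φ hφ).ncard = Nat.card V := by
  rw [cycleArcs, Set.ncard_range_of_injective, Nat.card_congr φ]
  intro i j hij
  exact φ.injective (congrArg (fun e : LineVertex A => e.val.1) hij)

end LineDigraph

lemma idNumber_eq_ncard {W : Type*} {R : W → W → Prop} {C : Set W} (hC : IsIdCode R C)
    (hmin : ∀ C', IsIdCode R C' → C.ncard ≤ C'.ncard) : idNumber R = C.ncard :=
  le_antisymm (Nat.sInf_le ⟨C, hC, rfl⟩) (le_csInf ⟨_, C, hC, rfl⟩ fun _ ⟨C', hC', h⟩ =>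
    h ▸ hmin C' hC')

theorem hamiltonian_line_digraph_id_number_general {V : Type*} [Fintype V]
    (A : V → V → Prop) (hloop : ∀ v : V, ¬ A v v)
    (hham : ∃ φ : ZMod (Fintype.card V) ≃ V, ∀ i : ZMod (Fintype.card V), A (φ i) (φ (i + 1)))
    (hin : ∀ v : V, 3 ≤ (Nminus A v).ncard) :
    idNumber (LineAdj A) = {p : V × V | A p.1 p.2}.ncard - Nat.card V := by
  obtain ⟨φ, hφ⟩ := hham
  set H := cycleArcs φ hφ
  have hcode : IsIdCode (LineAdj A) Hᶜ :=
    isIdCode_of_injOn_fst_compl hloop (by rw [compl_compl]; exact injOn_fst_cycleArcs φ hφ)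
      fun v => nontrivial_arcs_into_inter_compl (injOn_snd_cycleArcs φ hφ) (hin v)
  have hcard : Hᶜ.ncard = {p : V × V | A p.1 p.2}.ncard - Nat.card V := by
    have hsplit := Set.ncard_add_ncard_compl H
    rw [card_lineVertex, ncard_cycleArcs] at hsplit
    omega
  rw [← hcard]
  exact idNumber_eq_ncard hcode fun C hC => hcard ▸ hC.ncard_arcs_sub_card_le

/-- The identifying number of the line digraph of a Hamiltonian strongly connected
digraph of minimum in-degree at least 3 and minimum out-degree at least 2 equals
`|A(D)| - |V(D)|`. -/
theorem hamiltonian_line_digraph_id_number {V : Type*} [Fintype V]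
    (A : V → V → Prop) (hloop : ∀ v : V, ¬ A v v) (hsc : StronglyConnected A)
    (hham : ∃ φ : ZMod (Fintype.card V) ≃ V, ∀ i : ZMod (Fintype.card V), A (φ i) (φ (i + 1)))
    (hin : ∀ v : V, 3 ≤ (Nminus A v).ncard) (hout : ∀ v : V, 2 ≤ (Nplus A v).ncard) :
    idNumber (LineAdj A) = {p : V × V | A p.1 p.2}.ncard - Nat.card V :=
  hamiltonian_line_digraph_id_number_general A hloop hham hin
end
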